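/- arXiv:1509.07494 — 3 statements merged into one kernel-verified Lean document; each statement's English description precedes it below -/
import Mathlib

section
/- Let d ≥ 1 and r ≥ 1 be integers, let ℓ₁ < ℓ₂ < ⋯ < ℓ_r be integers, and let P ∈ ℤ[T, T⁻¹] be a Laurent polynomial. Then there are only finitely many tuples (a₁, …, a_r) of nonnegative integers for which there exist integers k₁ ≤ k₂ ≤ ⋯ ≤ k_d with ∑_{j=1}^d T^{k_j} = T^{ℓ₁}·P(T) + ∑_{j=1}^r a_j·T^{ℓ_j}·(1 − T⁴)(1 − T⁶) in ℤ[T, T⁻¹]. -/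
noncomputable section

open LaurentPolynomial in
theorem stmt4 (d r : ℕ) (hd : 1 ≤ d) (hr : 1 ≤ r) (ℓ : Fin r → ℤ) (hℓ : StrictMono ℓ)
    (P : LaurentPolynomial ℤ) :
    {a : Fin r → ℕ | ∃ k : Fin d → ℤ, Monotone k ∧
      (∑ j : Fin d, LaurentPolynomial.T (k j)) =
        LaurentPolynomial.T (ℓ ⟨0, hr⟩) * P +
          ∑ j : Fin r, (a j : LaurentPolynomial ℤ) * LaurentPolynomial.T (ℓ j) *
            ((1 - LaurentPolynomial.T 4) * (1 - LaurentPolynomial.T 6))}.Finite := by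
  classical
  set g : LaurentPolynomial ℤ := (1 - T 4) * (1 - T 6) with hgdef
  have hT : ∀ n m : ℤ, (T n : LaurentPolynomial ℤ).coeff m = if n = m then 1 else 0 := fun n m => by
    rw [T_apply]
  have hexp : ∀ m : ℤ, (T m : LaurentPolynomial ℤ) * g
      = T m - T (m+4) - T (m+6) + T (m+10) := by
    intro m
    have h10 : (T 10 : LaurentPolynomial ℤ) = T 4 * T 6 := by rw [← T_add]; norm_num
    simp only [hgdef, T_add, h10]; ring
  have hcast : ∀ (c : ℕ) (f : LaurentPolynomial ℤ) (n : ℤ),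
      ((c : LaurentPolynomial ℤ) * f).coeff n = c * f.coeff n := fun c f n => by
    rw [← nsmul_eq_mul, AddMonoidAlgebra.coeff_smul_apply]; push_cast [nsmul_eq_mul]; ring
  have hg0 : g ≠ 0 := by
    intro h
    have h1 : g.coeff (0:ℤ) = 0 := by rw [h]; rfl
    have h2 : g = T 0 - T 4 - T 6 + T 10 := by
      have := hexp 0
      rwa [T_zero, one_mul, zero_add, zero_add, zero_add] at this
    rw [h2, AddMonoidAlgebra.coeff_add, Finsupp.add_apply, AddMonoidAlgebra.coeff_sub, Finsupp.sub_apply, AddMonoidAlgebra.coeff_sub, Finsupp.sub_apply, hT, hT, hT, hT] at h1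
    norm_num at h1
  set S : Finset ℤ := (T (ℓ ⟨0, hr⟩) * P).coeff.support ∪
      Finset.univ.biUnion (fun j : Fin r => {ℓ j, ℓ j + 4, ℓ j + 6, ℓ j + 10}) with hS
  -- key: all witnesses k land in S
  have key : ∀ a : Fin r → ℕ, ∀ k : Fin d → ℤ,
      ((∑ j : Fin d, T (k j)) = T (ℓ ⟨0, hr⟩) * P +
        ∑ j : Fin r, (a j : LaurentPolynomial ℤ) * T (ℓ j) * g) → ∀ i, k i ∈ S := by
    intro a k hk i
    by_contra hmem
    simp only [hS, Finset.mem_union, Finset.mem_biUnion, Finset.mem_univ, true_and,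
      Finset.mem_insert, Finset.mem_singleton, not_or, not_exists] at hmem
    obtain ⟨h1, h2⟩ := hmem
    have hRHS : ((T (ℓ ⟨0, hr⟩) * P +
        ∑ j : Fin r, (a j : LaurentPolynomial ℤ) * T (ℓ j) * g : LaurentPolynomial ℤ)).coeff (k i)
        = 0 := by
      rw [AddMonoidAlgebra.coeff_add, Finsupp.add_apply, Finsupp.notMem_support_iff.mp h1, AddMonoidAlgebra.coeff_sum, Finsupp.finset_sum_apply]
      rw [zero_add]
      apply Finset.sum_eq_zero
      intro j _
      rw [mul_assoc, hexp, hcast]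
      rw [AddMonoidAlgebra.coeff_add, Finsupp.add_apply, AddMonoidAlgebra.coeff_sub, Finsupp.sub_apply, AddMonoidAlgebra.coeff_sub, Finsupp.sub_apply, hT, hT, hT, hT]
      obtain ⟨e1, e2, e3, e4⟩ := h2 j
      rw [if_neg (Ne.symm e1), if_neg (Ne.symm e2), if_neg (Ne.symm e3), if_neg (Ne.symm e4)]
      ring
    rw [← hk, AddMonoidAlgebra.coeff_sum, Finsupp.finset_sum_apply] at hRHS
    have hpos : (1:ℤ) ≤ ∑ j : Fin d, (T (k j) : LaurentPolynomial ℤ).coeff (k i) := by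
      have h1' : (T (k i) : LaurentPolynomial ℤ).coeff (k i) = 1 := by rw [hT]; simp
      calc (1:ℤ) = (T (k i) : LaurentPolynomial ℤ).coeff (k i) := h1'.symm
        _ ≤ _ := Finset.single_le_sum (f := fun j => (T (k j) : LaurentPolynomial ℤ).coeff (k i)) (fun j _ => by simp only [hT]; positivity) (Finset.mem_univ i)
    omega
  -- injectivity of a ↦ RHS-part
  have inj : ∀ a b : Fin r → ℕ,
      (∑ j : Fin r, (a j : LaurentPolynomial ℤ) * T (ℓ j) * g) =
      (∑ j : Fin r, (b j : LaurentPolynomial ℤ) * T (ℓ j) * g) → a = b := by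
    intro a b hab
    set Q : LaurentPolynomial ℤ := ∑ j : Fin r, ((a j : ℤ) - (b j : ℤ)) • T (ℓ j) with hQ
    have hQg : Q * g = 0 := by
      rw [hQ, Finset.sum_mul]
      have : ∀ j : Fin r, (((a j : ℤ) - (b j : ℤ)) • T (ℓ j)) * g =
          (a j : LaurentPolynomial ℤ) * T (ℓ j) * g -
          (b j : LaurentPolynomial ℤ) * T (ℓ j) * g := by
        intro j
        rw [zsmul_eq_mul]
        push_cast
        ring
      rw [Finset.sum_congr rfl (fun j _ => this j), Finset.sum_sub_distrib, hab, sub_self]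
    have hQ0 : Q = 0 := by
      rcases mul_eq_zero.mp hQg with h | h
      · exact h
      · exact absurd h hg0
    funext i
    have hco : Q.coeff (ℓ i) = (a i : ℤ) - (b i : ℤ) := by
      rw [hQ, AddMonoidAlgebra.coeff_sum, Finsupp.finset_sum_apply]
      have : ∀ j : Fin r, ((((a j : ℤ) - (b j : ℤ)) • T (ℓ j) : LaurentPolynomial ℤ)).coeff (ℓ i)
          = if j = i then (a j : ℤ) - (b j : ℤ) else 0 := by
        intro j
        rw [AddMonoidAlgebra.coeff_smul_apply, hT]
        by_cases hji : j = i
        · subst hji; simp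
        · rw [if_neg (fun h => hji (hℓ.injective h)), if_neg hji]; simp
      rw [Finset.sum_congr rfl (fun j _ => this j), Finset.sum_ite_eq' Finset.univ i]
      simp
    rw [hQ0] at hco
    have h0 : (0:ℤ) = (a i : ℤ) - (b i : ℤ) := by rw [← hco]; rfl
    have : (a i : ℤ) = (b i : ℤ) := by omega
    exact_mod_cast this
  -- finish: inject into Fin d → S
  rw [← Set.finite_coe_iff]
  let F : {a : Fin r → ℕ | ∃ k : Fin d → ℤ, Monotone k ∧
      (∑ j : Fin d, T (k j)) = T (ℓ ⟨0, hr⟩) * P +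
        ∑ j : Fin r, (a j : LaurentPolynomial ℤ) * T (ℓ j) * g} →
      (Fin d → {x : ℤ // x ∈ S}) := fun a i =>
    ⟨a.2.choose i, key a.1 a.2.choose a.2.choose_spec.2 i⟩
  apply Finite.of_injective F
  intro a b hFab
  have hk : a.2.choose = b.2.choose := by
    funext i
    exact congrArg Subtype.val (congrFun hFab i)
  have hsum : (∑ j : Fin d, (T (a.2.choose j) : LaurentPolynomial ℤ))
      = ∑ j : Fin d, T (b.2.choose j) := by rw [hk]
  have h1 := a.2.choose_spec.2
  have h2 := b.2.choose_spec.2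
  rw [h1, h2] at hsum
  exact Subtype.ext (inj a.1 b.1 (add_left_cancel hsum))

end
end

section
/- Let R = ℂ[x, y] be the polynomial ring in two variables, graded by assigning x degree 4 and y degree 6, and let δ : R → R be the unique ℂ-linear derivation with δ(x) = −(1/3)·y and δ(y) = −(1/2)·x², so that δ maps homogeneous elements of degree w to homogeneous elements of degree w + 2. Let d ≥ 1, let k₁ ≤ k₂ ≤ ⋯ ≤ k_d be integers, and let N = R^d be the free graded R-module whose i-th standard basis element has degree k_i. Suppose ∇ : N → N is a ℂ-linear map satisfying ∇(f·n) = δ(f)·n + f·∇(n) for all f ∈ R and n ∈ N, and mapping each homogeneous component N_w into N_{w+2}. Then there exists a homogeneous R-module basis (n₁, …, n_d) of N with deg(n_i) = k_i for all i, such that writing ∇(n_j) = ∑_{i=1}^d a_{ij}·n_i with a_{ij} ∈ R, every coefficient a_{ij} lies in the subring ℂ[x] (i.e., no a_{ij} involves the variable y). -/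
open MvPolynomial

noncomputable section

abbrev R2 := MvPolynomial (Fin 2) ℂ
abbrev W2 : Fin 2 → ℤ := ![4, 6]

lemma fin2_decomp (m : Fin 2 →₀ ℕ) : m = Finsupp.single 0 (m 0) + Finsupp.single 1 (m 1) := by
  ext i; fin_cases i <;> simp

lemma wt_apply (m : Fin 2 →₀ ℕ) : (Finsupp.weight W2) m = 4 * (m 0) + 6 * (m 1) := by
  conv_lhs => rw [fin2_decomp m]
  rw [map_add, Finsupp.weight_apply, Finsupp.weight_apply,
    Finsupp.sum_single_index, Finsupp.sum_single_index] <;> simp [W2]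
  ring

lemma wt_single (a b : ℕ) :
    (Finsupp.weight W2) (Finsupp.single (0 : Fin 2) a + Finsupp.single 1 b) = 4 * a + 6 * b := by
  rw [wt_apply]; simp

section Delta

variable (δ : R2 →ₗ[ℂ] R2)
  (hδleib : ∀ f g : R2, δ (f * g) = δ f * g + f * δ g)
  (hδx : δ (X 0) = -(1/3 : ℂ) • X 1)
  (hδy : δ (X 1) = -(1/2 : ℂ) • (X 0 * X 0))

include hδleib in
lemma delta_one : δ 1 = 0 := by
  have := hδleib 1 1
  simp only [mul_one, one_mul] at this
  linear_combination (norm := module) -this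

include hδleib in
lemma delta_C (c : ℂ) : δ (MvPolynomial.C c) = 0 := by
  have h : (MvPolynomial.C c : R2) = c • 1 := by
    rw [smul_eq_C_mul, mul_one]
  rw [h, map_smul, delta_one δ hδleib, smul_zero]

include hδleib hδx in
lemma delta_X0_pow (a : ℕ) :
    δ (X 0 ^ a) = MvPolynomial.C (-(a : ℂ)/3) * (X 0 ^ (a - 1) * X 1) := by
  have hδx' : δ (X 0) = MvPolynomial.C (-(1 : ℂ)/3) * X 1 := by
    rw [hδx, smul_eq_C_mul]; norm_num
  induction a with
  | zero => simp [delta_one δ hδleib]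
  | succ b ih =>
    rw [pow_succ, hδleib, ih, hδx']
    cases b with
    | zero => simp
    | succ c =>
      have h1 : ((c + 1 : ℕ) : ℂ) = (c : ℂ) + 1 := by push_cast; ring
      have h2 : ((c + 1 + 1 : ℕ) : ℂ) = (c : ℂ) + 2 := by push_cast; ring
      simp only [Nat.add_sub_cancel, h1, h2]
      have h3 : (-((c:ℂ) + 2)/3) = -(1:ℂ)/3 + (-((c:ℂ)+1)/3) := by ring
      rw [h3, map_add]
      have h4 : X 0 * X 0 ^ c = (X 0 : R2) ^ (c + 1) := by rw [pow_succ]; ring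
      rw [add_mul]
      ring_nf

include hδleib hδy in
lemma delta_X1_pow (b : ℕ) :
    δ (X 1 ^ b) = MvPolynomial.C (-(b : ℂ)/2) * (X 0 ^ 2 * X 1 ^ (b - 1)) := by
  have hδy' : δ (X 1) = MvPolynomial.C (-(1 : ℂ)/2) * (X 0 ^ 2) := by
    rw [hδy, smul_eq_C_mul]; norm_num; ring
  induction b with
  | zero => simp [delta_one δ hδleib]
  | succ c ih =>
    rw [pow_succ, hδleib, ih, hδy']
    cases c with
    | zero => simp
    | succ e =>
      have h1 : ((e + 1 : ℕ) : ℂ) = (e : ℂ) + 1 := by push_cast; ring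
      have h2 : ((e + 1 + 1 : ℕ) : ℂ) = (e : ℂ) + 2 := by push_cast; ring
      simp only [Nat.add_sub_cancel, h1, h2]
      have h3 : (-((e:ℂ) + 2)/2) = (-((e:ℂ)+1)/2) + -(1:ℂ)/2 := by ring
      rw [h3, map_add, add_mul]
      ring_nf

include hδleib hδx hδy in
lemma delta_pow_pow (a b : ℕ) :
    δ (X 0 ^ a * X 1 ^ b) =
      MvPolynomial.C (-(a : ℂ)/3) * (X 0 ^ (a - 1) * X 1 ^ (b + 1))
      + MvPolynomial.C (-(b : ℂ)/2) * (X 0 ^ (a + 2) * X 1 ^ (b - 1)) := by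
  rw [hδleib, delta_X0_pow δ hδleib hδx, delta_X1_pow δ hδleib hδy]
  rw [pow_succ]
  ring_nf

include hδleib hδx hδy in
lemma delta_monomial (a b : ℕ) (c : ℂ) :
    δ (monomial (Finsupp.single 0 a + Finsupp.single 1 b) c) =
      monomial (Finsupp.single 0 (a - 1) + Finsupp.single 1 (b + 1)) (c * (-(a : ℂ)/3))
      + monomial (Finsupp.single 0 (a + 2) + Finsupp.single 1 (b - 1)) (c * (-(b : ℂ)/2)) := by
  have key : ∀ (u v : ℕ) (r : ℂ),
      (monomial (Finsupp.single (0 : Fin 2) u + Finsupp.single 1 v)) r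
        = MvPolynomial.C r * (X 0 ^ u * X 1 ^ v) := by
    intro u v r
    rw [X_pow_eq_monomial, X_pow_eq_monomial, monomial_mul,
      show (MvPolynomial.C r : R2) = monomial 0 r from rfl, monomial_mul]
    simp
  rw [key, key, key]
  have : δ (MvPolynomial.C c * (X 0 ^ a * X 1 ^ b))
      = MvPolynomial.C c * δ (X 0 ^ a * X 1 ^ b) := by
    rw [hδleib, delta_C δ hδleib]; ring
  rw [this, delta_pow_pow δ hδleib hδx hδy]
  rw [map_mul, map_mul]
  ring

def predQ (n : ℕ) (g : R2) : Prop := ∀ m ∈ g.support, m 1 = 0 ∨ n ≤ m 0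

def predR (n : ℕ) (g : R2) : Prop := ∀ m ∈ g.support, n ≤ m 0

lemma predQ_zero (n : ℕ) : predQ n 0 := by intro m hm; simp at hm

lemma predQ_one (n : ℕ) : predQ n 1 := by
  intro m hm
  have : m = 0 := by
    have h1 : (1 : R2) = monomial 0 1 := by simp
    rw [h1, support_monomial] at hm
    simpa using hm
  simp [this]

lemma predQ_add {n : ℕ} {f g : R2} (hf : predQ n f) (hg : predQ n g) : predQ n (f + g) := by
  intro m hm
  rcases Finset.mem_union.mp (MvPolynomial.support_add hm) with h | h
  · exact hf m h
  · exact hg m h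

lemma predQ_neg {n : ℕ} {f : R2} (hf : predQ n f) : predQ n (-f) := by
  intro m hm
  exact hf m (by simpa using hm)

lemma predQ_mul {n : ℕ} {f g : R2} (hf : predQ n f) (hg : predQ n g) : predQ n (f * g) := by
  intro m hm
  obtain ⟨m₁, h₁, m₂, h₂, rfl⟩ := Finset.mem_add.mp (MvPolynomial.support_mul f g hm)
  rcases hf m₁ h₁ with hx | hx
  · rcases hg m₂ h₂ with hy | hy
    · left; simp [Finsupp.add_apply, hx, hy]
    · right; simp only [Finsupp.add_apply]; omega
  · right; simp only [Finsupp.add_apply]; omega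

lemma predR_imp_predQ {n : ℕ} {f : R2} (hf : predR n f) : predQ n f :=
  fun m hm => Or.inr (hf m hm)

lemma predR_add {n : ℕ} {f g : R2} (hf : predR n f) (hg : predR n g) : predR n (f + g) := by
  intro m hm
  rcases Finset.mem_union.mp (MvPolynomial.support_add hm) with h | h
  · exact hf m h
  · exact hg m h

lemma predR_mul_left {n : ℕ} (f : R2) {g : R2} (hg : predR n g) : predR n (f * g) := by
  intro m hm
  obtain ⟨m₁, h₁, m₂, h₂, rfl⟩ := Finset.mem_add.mp (MvPolynomial.support_mul f g hm)
  have := hg m₂ h₂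
  simp only [Finsupp.add_apply]; omega

lemma predR_zero (n : ℕ) : predR n 0 := by intro m hm; simp at hm

lemma predQ_finsum {n : ℕ} {α : Type*} {t : Finset α} {f : α → R2}
    (hf : ∀ x ∈ t, predQ n (f x)) : predQ n (∑ x ∈ t, f x) := by
  intro m hm
  obtain ⟨x, hx, hm2⟩ := Finset.mem_biUnion.mp (MvPolynomial.support_sum hm)
  exact hf x hx m hm2

lemma predR_finsum {n : ℕ} {α : Type*} {t : Finset α} {f : α → R2}
    (hf : ∀ x ∈ t, predR n (f x)) : predR n (∑ x ∈ t, f x) := by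
  intro m hm
  obtain ⟨x, hx, hm2⟩ := Finset.mem_biUnion.mp (MvPolynomial.support_sum hm)
  exact hf x hx m hm2

/-- The partial inverse of the `y`-raising part of `δ`, applied to the part of `g`
with `y`-content and `x`-exponent exactly `n`. -/
def Sop (n : ℕ) (g : R2) : R2 :=
  ∑ m ∈ g.support,
    if m 1 ≠ 0 ∧ m 0 = n then
      monomial (Finsupp.single 0 (n + 1) + Finsupp.single 1 (m 1 - 1))
        ((3 / ((n : ℂ) + 1)) * coeff m g)
    else 0

lemma Sop_support {n : ℕ} {g : R2} : predR (n + 1) (Sop n g) := by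
  intro m' hm'
  obtain ⟨m, hm, hm'2⟩ := Finset.mem_biUnion.mp (MvPolynomial.support_sum hm')
  by_cases hp : m 1 ≠ 0 ∧ m 0 = n
  · rw [if_pos hp] at hm'2
    have h3 := MvPolynomial.support_monomial_subset hm'2
    rw [Finset.mem_singleton] at h3
    subst h3
    simp [Finsupp.add_apply, Finsupp.single_apply]
  · rw [if_neg hp] at hm'2; simp at hm'2

lemma Sop_hom {n : ℕ} {w : ℤ} {g : R2} (hg : g.IsWeightedHomogeneous W2 w) :
    (Sop n g).IsWeightedHomogeneous W2 (w - 2) := by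
  rw [← mem_weightedHomogeneousSubmodule]
  apply Submodule.sum_mem
  intro m hm
  by_cases hp : m 1 ≠ 0 ∧ m 0 = n
  · rw [if_pos hp, mem_weightedHomogeneousSubmodule]
    apply isWeightedHomogeneous_monomial
    rw [wt_single]
    have hw := hg (MvPolynomial.mem_support_iff.mp hm)
    rw [wt_apply] at hw
    have h1 : 1 ≤ m 1 := by omega
    have h0 : m 0 = n := hp.2
    rw [Nat.cast_sub h1]
    push_cast
    rw [← hw, h0]
    push_cast
    ring
  · rw [if_neg hp]; exact Submodule.zero_mem _


include hδleib hδx hδy in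
lemma Sop_expand (n : ℕ) (g : R2) :
    g + δ (Sop n g) = ∑ m ∈ g.support,
      (if m 1 ≠ 0 ∧ m 0 = n then
        monomial (Finsupp.single 0 (n + 1 + 2) + Finsupp.single 1 (m 1 - 1 - 1))
          ((3 / ((n : ℂ) + 1)) * coeff m g * (-(((m 1 - 1 : ℕ)) : ℂ) / 2))
      else monomial m (coeff m g)) := by
  nth_rewrite 1 [← support_sum_monomial_coeff g]
  rw [Sop, map_sum, ← Finset.sum_add_distrib]
  apply Finset.sum_congr rfl
  intro m hm
  by_cases hp : m 1 ≠ 0 ∧ m 0 = n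
  · rw [if_pos hp, if_pos hp,
      delta_monomial δ hδleib hδx hδy]
    have hidx : Finsupp.single (0 : Fin 2) (n + 1 - 1) + Finsupp.single 1 (m 1 - 1 + 1) = m := by
      have h1 : n + 1 - 1 = n := by omega
      have h2 : m 1 - 1 + 1 = m 1 := by omega
      rw [h1, h2, ← hp.2]
      exact (fin2_decomp m).symm
    rw [hidx]
    have hco : (3 / ((n : ℂ) + 1)) * coeff m g * (-(((n + 1 : ℕ)) : ℂ) / 3) = -coeff m g := by
      have hnz : ((n : ℂ) + 1) ≠ 0 := Nat.cast_add_one_ne_zero n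
      push_cast
      field_simp
    rw [hco]
    rw [show monomial m (-coeff m g) = -monomial m (coeff m g) by
      rw [← map_neg (monomial m)]]
    ring
  · rw [if_neg hp, if_neg hp, map_zero, add_zero]

include hδleib hδx hδy in
lemma Sop_cancel {n : ℕ} {g : R2} (hg : predQ n g) : predQ (n + 1) (g + δ (Sop n g)) := by
  intro m' hm'
  rw [Sop_expand δ hδleib hδx hδy] at hm'
  obtain ⟨m, hm, hm'2⟩ := Finset.mem_biUnion.mp (MvPolynomial.support_sum hm')
  by_cases hp : m 1 ≠ 0 ∧ m 0 = n
  · rw [if_pos hp] at hm'2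
    have h3 := MvPolynomial.support_monomial_subset hm'2
    rw [Finset.mem_singleton] at h3
    subst h3
    right
    simp [Finsupp.add_apply, Finsupp.single_apply]
  · rw [if_neg hp] at hm'2
    have h3 := MvPolynomial.support_monomial_subset hm'2
    rw [Finset.mem_singleton] at h3
    rw [h3]
    rcases hg m hm with h | h
    · exact Or.inl h
    · push_neg at hp
      by_cases hy : m 1 = 0
      · exact Or.inl hy
      · right; have := hp hy; omega

include hδleib hδx hδy in
lemma delta_Sop_hom {n : ℕ} {w : ℤ} {g : R2} (hg : g.IsWeightedHomogeneous W2 w) :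
    (δ (Sop n g)).IsWeightedHomogeneous W2 w := by
  rw [Sop, map_sum, ← mem_weightedHomogeneousSubmodule]
  apply Submodule.sum_mem
  intro m hm
  by_cases hp : m 1 ≠ 0 ∧ m 0 = n
  · rw [if_pos hp, delta_monomial δ hδleib hδx hδy]
    have hw := hg (MvPolynomial.mem_support_iff.mp hm)
    rw [wt_apply] at hw
    apply Submodule.add_mem
    · rw [mem_weightedHomogeneousSubmodule]
      apply isWeightedHomogeneous_monomial
      rw [wt_single]
      have h1 : n + 1 - 1 = n := by omega
      have h2 : m 1 - 1 + 1 = m 1 := by omega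
      rw [h1, h2, ← hw, hp.2]
    · by_cases h2 : 2 ≤ m 1
      · rw [mem_weightedHomogeneousSubmodule]
        apply isWeightedHomogeneous_monomial
        rw [wt_single]
        rw [← hw, hp.2]
        have e1 : ((n + 1 + 2 : ℕ) : ℤ) = (n : ℤ) + 3 := by push_cast; ring
        have e2 : ((m 1 - 1 - 1 : ℕ) : ℤ) = (m 1 : ℤ) - 2 := by
          have : 2 ≤ m 1 := h2
          omega
        rw [e1, e2]
        push_cast
        ring
      · have h1 : m 1 = 1 := by omega
        have : ((m 1 - 1 : ℕ) : ℂ) = 0 := by rw [h1]; simp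
        rw [this]
        simp only [neg_zero, zero_div, mul_zero, map_zero]
        exact Submodule.zero_mem _
  · rw [if_neg hp, map_zero]; exact Submodule.zero_mem _

end Delta

section Mat

variable {d : ℕ} (k : Fin d → ℤ)

abbrev Mx (d : ℕ) := Matrix (Fin d) (Fin d) R2

lemma hom_congr {g : R2} {w w' : ℤ} (h : w = w') (hg : g.IsWeightedHomogeneous W2 w) :
    g.IsWeightedHomogeneous W2 w' := h ▸ hg

def HomM (s : ℤ) (M : Mx d) : Prop :=
  ∀ i j, (M i j).IsWeightedHomogeneous W2 (k j - k i + s)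

def QM (n : ℕ) (M : Mx d) : Prop := ∀ i j, predQ n (M i j)

lemma HomM_one : HomM k 0 (1 : Mx d) := by
  intro i j
  rcases eq_or_ne i j with rfl | hne
  · rw [Matrix.one_apply_eq]
    exact hom_congr (by ring) (isWeightedHomogeneous_one ℂ W2)
  · rw [Matrix.one_apply_ne hne]
    exact isWeightedHomogeneous_zero ℂ W2 _

lemma HomM_add {s : ℤ} {M N : Mx d} (hM : HomM k s M) (hN : HomM k s N) :
    HomM k s (M + N) := by
  intro i j
  rw [Matrix.add_apply, ← mem_weightedHomogeneousSubmodule]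
  exact Submodule.add_mem _ (hM i j) (hN i j)

lemma HomM_neg {s : ℤ} {M : Mx d} (hM : HomM k s M) : HomM k s (-M) := by
  intro i j
  rw [Matrix.neg_apply, ← mem_weightedHomogeneousSubmodule]
  exact Submodule.neg_mem _ (hM i j)

lemma HomM_mul {s t : ℤ} {M N : Mx d} (hM : HomM k s M) (hN : HomM k t N) :
    HomM k (s + t) (M * N) := by
  intro i j
  rw [Matrix.mul_apply, ← mem_weightedHomogeneousSubmodule]
  apply Submodule.sum_mem
  intro l _
  rw [mem_weightedHomogeneousSubmodule]
  exact hom_congr (by ring) ((hM i l).mul (hN l j))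

lemma HomM_pow {M : Mx d} (hM : HomM k 0 M) : ∀ r : ℕ, HomM k 0 (M ^ r) := by
  intro r
  induction r with
  | zero => rw [pow_zero]; exact HomM_one k
  | succ r ih =>
    rw [pow_succ]
    have := HomM_mul k ih hM
    rwa [add_zero] at this

lemma HomM_sum {s : ℤ} {α : Type*} {t : Finset α} {f : α → Mx d}
    (hf : ∀ x ∈ t, HomM k s (f x)) : HomM k s (∑ x ∈ t, f x) := by
  intro i j
  rw [Matrix.sum_apply, ← mem_weightedHomogeneousSubmodule]
  exact Submodule.sum_mem _ fun x hx => (hf x hx) i j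

lemma QM_one (n : ℕ) : QM n (1 : Mx d) := by
  intro i j
  rcases eq_or_ne i j with rfl | hne
  · rw [Matrix.one_apply_eq]; exact predQ_one n
  · rw [Matrix.one_apply_ne hne]; exact predQ_zero n

lemma QM_add {n : ℕ} {M N : Mx d} (hM : QM n M) (hN : QM n N) : QM n (M + N) :=
  fun i j => by rw [Matrix.add_apply]; exact predQ_add (hM i j) (hN i j)

lemma QM_neg {n : ℕ} {M : Mx d} (hM : QM n M) : QM n (-M) :=
  fun i j => by rw [Matrix.neg_apply]; exact predQ_neg (hM i j)

lemma QM_mul {n : ℕ} {M N : Mx d} (hM : QM n M) (hN : QM n N) : QM n (M * N) := by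
  intro i j
  rw [Matrix.mul_apply]
  exact predQ_finsum fun l _ => predQ_mul (hM i l) (hN l j)

lemma QM_pow {n : ℕ} {M : Mx d} (hM : QM n M) : ∀ r : ℕ, QM n (M ^ r) := by
  intro r
  induction r with
  | zero => rw [pow_zero]; exact QM_one n
  | succ r ih => rw [pow_succ]; exact QM_mul ih hM

lemma QM_sum {n : ℕ} {α : Type*} {t : Finset α} {f : α → Mx d}
    (hf : ∀ x ∈ t, QM n (f x)) : QM n (∑ x ∈ t, f x) := by
  intro i j
  rw [Matrix.sum_apply]
  exact predQ_finsum fun x hx => hf x hx i j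

lemma pow_bound {C : Mx d} (hC : ∀ i j, C i j ≠ 0 → i < j) :
    ∀ (r : ℕ) (i j : Fin d), (C ^ r) i j ≠ 0 → (i : ℕ) + r ≤ (j : ℕ) := by
  intro r
  induction r with
  | zero =>
    intro i j h
    rw [pow_zero] at h
    rcases eq_or_ne i j with rfl | hne
    · omega
    · exact absurd (Matrix.one_apply_ne hne) h
  | succ r ih =>
    intro i j h
    rw [pow_succ'] at h
    obtain ⟨l, hl⟩ : ∃ l, C i l * (C ^ r) l j ≠ 0 := by
      by_contra hall
      push_neg at hall
      exact h (by rw [Matrix.mul_apply]; exact Finset.sum_eq_zero fun l _ => hall l)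
    have h1 := hC i l (left_ne_zero_of_mul hl)
    have h2 := ih l j (right_ne_zero_of_mul hl)
    have : (i : ℕ) < l := h1
    omega

lemma nilpotentC {C : Mx d} (hC : ∀ i j, C i j ≠ 0 → i < j) : C ^ d = 0 := by
  refine Matrix.ext fun i j => ?_
  rw [Matrix.zero_apply]
  by_contra h
  have := pow_bound hC d i j h
  have := j.isLt
  omega

lemma geom_left (x : Mx d) : ∀ nn : ℕ,
    (1 - x) * ∑ r ∈ Finset.range nn, x ^ r = 1 - x ^ nn := by
  intro nn
  induction nn with
  | zero => simp
  | succ m ih =>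
    rw [Finset.sum_range_succ, mul_add, ih]
    have hx : (1 - x) * x ^ m = x ^ m - x ^ (m + 1) := by
      rw [sub_mul, one_mul, ← pow_succ']
    rw [hx]
    abel

lemma geom_right (x : Mx d) : ∀ nn : ℕ,
    (∑ r ∈ Finset.range nn, x ^ r) * (1 - x) = 1 - x ^ nn := by
  intro nn
  induction nn with
  | zero => simp
  | succ m ih =>
    rw [Finset.sum_range_succ, add_mul, ih]
    have hx : x ^ m * (1 - x) = x ^ m - x ^ (m + 1) := by
      rw [mul_sub, mul_one, ← pow_succ]
    rw [hx]
    abel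

section Gauge

variable {d : ℕ} (k : Fin d → ℤ) (δ : R2 →ₗ[ℂ] R2)
  (hδleib : ∀ f g : R2, δ (f * g) = δ f * g + f * δ g)
  (hδx : δ (X 0) = -(1/3 : ℂ) • X 1)
  (hδy : δ (X 1) = -(1/2 : ℂ) • (X 0 * X 0))

include hδleib in
lemma mapδ_mul (M N : Mx d) : (M * N).map δ = M.map δ * N + M * N.map δ := by
  refine Matrix.ext fun i j => ?_
  rw [Matrix.add_apply, Matrix.map_apply, Matrix.mul_apply, map_sum,
    Matrix.mul_apply, Matrix.mul_apply, ← Finset.sum_add_distrib]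
  exact Finset.sum_congr rfl fun l _ => by
    rw [hδleib, Matrix.map_apply, Matrix.map_apply]

include hδleib in
lemma mapδ_one_add (C : Mx d) : ((1 : Mx d) + C).map δ = C.map δ := by
  refine Matrix.ext fun i j => ?_
  rw [Matrix.map_apply, Matrix.add_apply, map_add, Matrix.map_apply]
  rcases eq_or_ne i j with rfl | hne
  · rw [Matrix.one_apply_eq, delta_one δ hδleib, zero_add]
  · rw [Matrix.one_apply_ne hne, map_zero, zero_add]

include hδleib hδx hδy in
lemma step (hk : Monotone k) (n : ℕ) (A : Mx d)
    (hA1 : HomM k 2 A) (hA2 : QM n A) :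
    ∃ P Pinv : Mx d,
      P * Pinv = 1 ∧ Pinv * P = 1 ∧ HomM k 0 P ∧ HomM k 0 Pinv ∧
      HomM k 2 (Pinv * (A * P + P.map δ)) ∧
      QM (n + 1) (Pinv * (A * P + P.map δ)) := by
  set C : Mx d := Matrix.of (fun i j => Sop n (A i j)) with hCdef
  have hCentry : ∀ i j, C i j = Sop n (A i j) := fun i j => rfl
  have hChom : HomM k 0 C := by
    intro i j
    rw [hCentry]
    exact hom_congr (by ring) (Sop_hom (hA1 i j))
  have hCR : ∀ i j, predR (n + 1) (C i j) := fun i j => by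
    rw [hCentry]; exact Sop_support
  have hCQ : QM (n + 1) C := fun i j => predR_imp_predQ (hCR i j)
  have hCs : ∀ i j, C i j ≠ 0 → i < j := by
    intro i j hne
    by_contra hij
    apply hne
    have hkji : k j ≤ k i := hk (le_of_not_gt hij)
    rw [hCentry, Sop]
    apply Finset.sum_eq_zero
    intro m hm
    rw [if_neg]
    intro hp
    have hw := hA1 i j (MvPolynomial.mem_support_iff.mp hm)
    rw [wt_apply] at hw
    have h1 : 1 ≤ m 1 := by omega
    omega
  have hCnil : C ^ d = 0 := nilpotentC hCs
  set E : Mx d := ∑ r ∈ Finset.range d, (-C) ^ r with hEdef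
  have hPE : ((1 : Mx d) + C) * E = 1 := by
    have hg := geom_left (-C) d
    rw [sub_neg_eq_add] at hg
    rw [hEdef, hg, neg_pow, hCnil, mul_zero, sub_zero]
  have hEP : E * ((1 : Mx d) + C) = 1 := by
    have hg := geom_right (-C) d
    rw [sub_neg_eq_add] at hg
    rw [hEdef, hg, neg_pow, hCnil, mul_zero, sub_zero]
  have hEhom : HomM k 0 E := by
    rw [hEdef]
    exact HomM_sum k fun r _ => HomM_pow k (HomM_neg k hChom) r
  have hEQ : QM (n + 1) E := by
    rw [hEdef]
    exact QM_sum fun r _ => QM_pow (QM_neg hCQ) r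
  have hPhom : HomM k 0 ((1 : Mx d) + C) := HomM_add k (HomM_one k) hChom
  have hmapδ : ((1 : Mx d) + C).map δ = C.map δ := mapδ_one_add δ hδleib C
  have hmapδhom : HomM k 2 (C.map δ) := by
    intro i j
    rw [Matrix.map_apply, hCentry]
    exact delta_Sop_hom δ hδleib hδx hδy (hA1 i j)
  refine ⟨(1 : Mx d) + C, E, hPE, hEP, hPhom, hEhom, ?_, ?_⟩
  · rw [hmapδ]
    have h1 : HomM k 2 (A * ((1 : Mx d) + C)) := by
      have := HomM_mul k hA1 hPhom
      rwa [add_zero] at this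
    have h2 := HomM_add k h1 hmapδhom
    have := HomM_mul k hEhom h2
    rwa [zero_add] at this
  · rw [hmapδ, mul_one_add]
    have hsplit : A + A * C + C.map δ = (A + C.map δ) + A * C := by abel
    rw [hsplit]
    apply QM_mul hEQ
    apply QM_add
    · intro i j
      rw [Matrix.add_apply, Matrix.map_apply, hCentry]
      exact Sop_cancel δ hδleib hδx hδy (hA2 i j)
    · intro i j
      rw [Matrix.mul_apply]
      apply predR_imp_predQ
      exact predR_finsum fun l _ => predR_mul_left _ (hCR l j)

include hδleib hδx hδy in
lemma gauge_rec (hk : Monotone k) (B : ℤ) (hB : ∀ i j : Fin d, k j + 2 - k i ≤ B) :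
    ∀ (r nn : ℕ), B < 4 * ((nn : ℤ) + r) →
      ∀ A : Mx d, HomM k 2 A → QM nn A →
      ∃ P Pinv : Mx d, P * Pinv = 1 ∧ Pinv * P = 1 ∧ HomM k 0 P ∧
        (∀ i j, ∀ m ∈ ((Pinv * (A * P + P.map δ)) i j).support, m 1 = 0) := by
  intro r
  induction r with
  | zero =>
    intro nn hlt A hA1 hA2
    refine ⟨1, 1, by rw [mul_one], by rw [mul_one], HomM_one k, ?_⟩
    intro i j m hm
    have hone : ((1 : Mx d)).map δ = 0 := by
      refine Matrix.ext fun i j => ?_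
      rw [Matrix.map_apply, Matrix.zero_apply]
      rcases eq_or_ne i j with rfl | hne
      · rw [Matrix.one_apply_eq, delta_one δ hδleib]
      · rw [Matrix.one_apply_ne hne, map_zero]
    rw [hone, add_zero, Matrix.mul_one, Matrix.one_mul] at hm
    rcases hA2 i j m hm with h | h
    · exact h
    · exfalso
      have hw := hA1 i j (MvPolynomial.mem_support_iff.mp hm)
      rw [wt_apply] at hw
      have hb := hB i j
      omega
  | succ r ih =>
    intro nn hlt A hA1 hA2
    obtain ⟨P₀, Pinv₀, h1, h2, h3, h4, h5, h6⟩ :=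
      step k δ hδleib hδx hδy hk nn A hA1 hA2
    obtain ⟨P₁, Pinv₁, g1, g2, g3, g4⟩ :=
      ih (nn + 1) (by push_cast; push_cast at hlt; linarith) _ h5 h6
    refine ⟨P₀ * P₁, Pinv₁ * Pinv₀, ?_, ?_, ?_, ?_⟩
    · rw [Matrix.mul_assoc, ← Matrix.mul_assoc P₁, g1, Matrix.one_mul, h1]
    · rw [Matrix.mul_assoc, ← Matrix.mul_assoc Pinv₀, h2, Matrix.one_mul, g2]
    · have := HomM_mul k h3 g3
      rwa [add_zero] at this
    · have hmap : (P₀ * P₁).map δ = P₀.map δ * P₁ + P₀ * P₁.map δ :=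
        mapδ_mul δ hδleib P₀ P₁
      have key : (Pinv₁ * Pinv₀) * (A * (P₀ * P₁) + (P₀ * P₁).map δ)
          = Pinv₁ * ((Pinv₀ * (A * P₀ + P₀.map δ)) * P₁ + P₁.map δ) := by
        rw [hmap]
        have e : Pinv₀ * (P₀ * P₁.map δ) = P₁.map δ := by
          rw [← Matrix.mul_assoc, h2, Matrix.one_mul]
        simp only [Matrix.mul_add, Matrix.add_mul, Matrix.mul_assoc]
        rw [e]
        abel
      rw [key]
      exact g4
  
end Gauge

end Mat

theorem stmt9 (d : ℕ) (hd : 1 ≤ d) (k : Fin d → ℤ) (hk : Monotone k)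
    (δ : MvPolynomial (Fin 2) ℂ →ₗ[ℂ] MvPolynomial (Fin 2) ℂ)
    (hδleib : ∀ f g : MvPolynomial (Fin 2) ℂ, δ (f * g) = δ f * g + f * δ g)
    (hδx : δ (MvPolynomial.X 0) = -(1/3 : ℂ) • MvPolynomial.X 1)
    (hδy : δ (MvPolynomial.X 1) = -(1/2 : ℂ) • (MvPolynomial.X 0 * MvPolynomial.X 0))
    (nabla : (Fin d → MvPolynomial (Fin 2) ℂ) →ₗ[ℂ] (Fin d → MvPolynomial (Fin 2) ℂ))
    (hleib : ∀ (f : MvPolynomial (Fin 2) ℂ) (n : Fin d → MvPolynomial (Fin 2) ℂ),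
      nabla (f • n) = δ f • n + f • nabla n)
    (hgrad : ∀ (w : ℤ) (n : Fin d → MvPolynomial (Fin 2) ℂ),
      (∀ i, (n i).IsWeightedHomogeneous ![4, 6] (w - k i)) →
      ∀ i, ((nabla n) i).IsWeightedHomogeneous ![4, 6] (w + 2 - k i)) :
    ∃ b : Module.Basis (Fin d) (MvPolynomial (Fin 2) ℂ) (Fin d → MvPolynomial (Fin 2) ℂ),
      (∀ i j, ((b i) j).IsWeightedHomogeneous ![4, 6] (k i - k j)) ∧
      ∃ a : Fin d → Fin d → MvPolynomial (Fin 2) ℂ,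
        (∀ j, nabla (b j) = ∑ i, a i j • b i) ∧
        ∀ i j, ∀ m ∈ (a i j).support, m 1 = 0 := by
  classical
  set A : Mx d := Matrix.of (fun i j => nabla (Pi.single j 1) i) with hAdef
  have hAentry : ∀ i j, A i j = nabla (Pi.single j 1) i := fun i j => rfl
  have hstd : ∀ j i : Fin d,
      ((Pi.single j (1 : R2) : Fin d → R2) i).IsWeightedHomogeneous W2 (k j - k i) := by
    intro j i
    rcases eq_or_ne i j with rfl | hne
    · rw [Pi.single_eq_same, show k i - k i = 0 by ring]
      exact isWeightedHomogeneous_one ℂ W2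
    · rw [Pi.single_eq_of_ne hne]
      exact isWeightedHomogeneous_zero ℂ W2 _
  have hA1 : HomM k 2 A := by
    intro i j
    have := hgrad (k j) (Pi.single j 1) (fun i => hstd j i) i
    exact hom_congr (by ring) this
  have hA2 : QM 0 A := fun i j m _ => Or.inr (Nat.zero_le _)
  have hd0 : 0 < d := hd
  set i0 : Fin d := ⟨0, hd0⟩ with hi0
  set i1 : Fin d := ⟨d - 1, by omega⟩ with hi1
  set B : ℤ := k i1 + 2 - k i0 with hBdef
  have hB : ∀ i j : Fin d, k j + 2 - k i ≤ B := by
    intro i j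
    have h1 : k j ≤ k i1 := by
      apply hk
      rw [hi1, Fin.le_def]
      show (j : ℕ) ≤ d - 1
      have := j.isLt
      omega
    have h2 : k i0 ≤ k i := by
      apply hk
      rw [hi0, Fin.le_def]
      show 0 ≤ (i : ℕ)
      omega
    omega
  obtain ⟨P, Pinv, hPP, hPiP, hPhom, hfree⟩ :=
    gauge_rec k δ hδleib hδx hδy hk B hB (B.toNat + 1) 0
      (by
        have := Int.self_le_toNat B
        push_cast
        omega)
      A hA1 hA2
  have hnab : ∀ v : Fin d → R2, ∀ i, nabla v i = δ (v i) + ∑ j, A i j * v j := by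
    intro v i
    have hv : v = ∑ j, (v j) • (Pi.single j (1 : R2) : Fin d → R2) := by
      funext l
      rw [Finset.sum_apply]
      simp [Pi.single_apply]
    conv_lhs => rw [hv]
    rw [map_sum, Finset.sum_apply]
    have hterm : ∀ j, nabla ((v j) • (Pi.single j (1 : R2) : Fin d → R2)) i
        = δ (v j) * (Pi.single j (1 : R2) : Fin d → R2) i + v j * A i j := by
      intro j
      rw [hleib]
      simp [hAentry, smul_eq_mul]
    rw [Finset.sum_congr rfl fun j _ => hterm j, Finset.sum_add_distrib]
    congr 1
    · simp [Pi.single_apply]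
    · exact Finset.sum_congr rfl fun j _ => mul_comm _ _
  have heq1 : Matrix.toLin' P ∘ₗ Matrix.toLin' Pinv = LinearMap.id := by
    rw [← Matrix.toLin'_mul, hPP, Matrix.toLin'_one]
  have heq2 : Matrix.toLin' Pinv ∘ₗ Matrix.toLin' P = LinearMap.id := by
    rw [← Matrix.toLin'_mul, hPiP, Matrix.toLin'_one]
  set eqv : (Fin d → R2) ≃ₗ[R2] (Fin d → R2) :=
    LinearEquiv.ofLinear (Matrix.toLin' P) (Matrix.toLin' Pinv) heq1 heq2 with heqv
  set b := (Pi.basisFun R2 (Fin d)).map eqv with hbdef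
  have hb : ∀ j, (b j : Fin d → R2) = fun i => P i j := by
    intro j
    rw [hbdef, Module.Basis.map_apply, Pi.basisFun_apply, heqv, LinearEquiv.ofLinear_apply,
      Matrix.toLin'_apply, Matrix.mulVec_single]
    funext i
    exact mul_one _
  set A' : Mx d := Pinv * (A * P + P.map δ) with hA'def
  have hPA' : P * A' = A * P + P.map δ := by
    rw [hA'def, ← Matrix.mul_assoc, hPP, Matrix.one_mul]
  refine ⟨b, ?_, (fun i j => A' i j), ?_, ?_⟩
  · intro i j
    rw [hb]
    exact hom_congr (by ring) (hPhom j i)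
  · intro j
    funext i
    rw [hnab (b j) i, hb j]
    have lhs_eq : δ (P i j) + ∑ l, A i l * P l j = (A * P + P.map δ) i j := by
      rw [Matrix.add_apply, Matrix.mul_apply, Matrix.map_apply, add_comm]
    rw [lhs_eq, ← hPA', Matrix.mul_apply]
    rw [Finset.sum_apply]
    apply Finset.sum_congr rfl
    intro l _
    rw [Pi.smul_apply, hb l]
    simp [smul_eq_mul, mul_comm]
  · exact hfree

end
end

section
/- Let ρ : SL₂(ℤ) → GL_d(ℂ) be a group homomorphism and let L be a complex d×d matrix such that the matrix exponential exp(2πi·L) equals ρ(T), where T = [[1,1],[0,1]]. Then 12·Tr(L) is an integer, i.e., there exists n ∈ ℤ with 12·Tr(L) = n. -/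
open Matrix UpperHalfPlane
open scoped Manifold MatrixGroups

noncomputable section

abbrev SL2Z := Matrix.SpecialLinearGroup (Fin 2) ℤ

/-- The automorphy factor `c·τ + d` for `γ = [[a,b],[c,d]] ∈ SL₂(ℤ)`. -/
def autFactor (γ : SL2Z) (τ : ℍ) : ℂ :=
  ((γ 1 0 : ℤ) : ℂ) * (τ : ℂ) + ((γ 1 1 : ℤ) : ℂ)

/-- The transformation law `F(γ·τ) = (cτ+d)^k ρ(γ) F(τ)`. -/
def SlashCond {d : ℕ} (ρ : SL2Z →* GL (Fin d) ℂ) (k : ℤ) (F : ℍ → Fin d → ℂ) : Prop :=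
  ∀ γ : SL2Z, ∀ τ : ℍ,
    F (γ • τ) = autFactor γ τ ^ k • Matrix.mulVec (ρ γ : Matrix (Fin d) (Fin d) ℂ) (F τ)

/-- A vector valued modular form of weight `k` for `ρ`: holomorphic components,
the transformation law, and components bounded at `i∞`. -/
def IsVVMF {d : ℕ} (ρ : SL2Z →* GL (Fin d) ℂ) (k : ℤ) (F : ℍ → Fin d → ℂ) : Prop :=
  (∀ i, MDifferentiable 𝓘(ℂ) 𝓘(ℂ) fun τ : ℍ => F τ i) ∧
  SlashCond ρ k F ∧
  (∀ i, ∃ A : ℝ, 0 < A ∧ ∃ C : ℝ, ∀ τ : ℍ, A ≤ τ.im → ‖F τ i‖ ≤ C)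

/-- A classical scalar modular form of weight `w` and level one. -/
def IsScalarMF (w : ℤ) (f : ℍ → ℂ) : Prop :=
  MDifferentiable 𝓘(ℂ) 𝓘(ℂ) f ∧
  (∀ γ : SL2Z, ∀ τ : ℍ, f (γ • τ) = autFactor γ τ ^ w * f τ) ∧
  (∃ A : ℝ, 0 < A ∧ ∃ C : ℝ, ∀ τ : ℍ, A ≤ τ.im → ‖f τ‖ ≤ C)

/-- The space `M_k(ρ)` of vector valued modular forms of weight `k` for `ρ`,
as a subspace of the space of all functions `ℍ → ℂ^d`. -/
def MkSpace {d : ℕ} (ρ : SL2Z →* GL (Fin d) ℂ) (k : ℤ) : Submodule ℂ (ℍ → Fin d → ℂ) :=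
  Submodule.span ℂ {F | IsVVMF ρ k F}

/-- The subspace `E₄·M_{k-4}(ρ) + E₆·M_{k-6}(ρ)` of `M_k(ρ)`, described (independently of the
choice of nonzero `E₄ ∈ M₄`, `E₆ ∈ M₆`) as the span of all products of a weight `4` scalar
form with a weight `k-4` form for `ρ`, together with all products of a weight `6` scalar form
with a weight `k-6` form for `ρ`. -/
def OldSpace {d : ℕ} (ρ : SL2Z →* GL (Fin d) ℂ) (k : ℤ) : Submodule ℂ (ℍ → Fin d → ℂ) :=
  Submodule.span ℂ
    ({G | ∃ f F, IsScalarMF 4 f ∧ IsVVMF ρ (k - 4) F ∧ G = fun τ i => f τ * F τ i} ∪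
     {G | ∃ f F, IsScalarMF 6 f ∧ IsVVMF ρ (k - 6) F ∧ G = fun τ i => f τ * F τ i})

/-- The generating multiplicity `m_ρ(k) = dim M_k(ρ) - dim (E₄·M_{k-4}(ρ) + E₆·M_{k-6}(ρ))`. -/
def genMult {d : ℕ} (ρ : SL2Z →* GL (Fin d) ℂ) (k : ℤ) : ℕ :=
  Module.finrank ℂ (MkSpace ρ k) - Module.finrank ℂ (OldSpace ρ k)

/-- `ρ` is irreducible: the only invariant subspaces of `ℂ^d` are `0` and `ℂ^d`. -/
def IsIrred {d : ℕ} (ρ : SL2Z →* GL (Fin d) ℂ) : Prop :=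
  ∀ W : Submodule ℂ (Fin d → ℂ),
    (∀ γ : SL2Z, ∀ v ∈ W, Matrix.mulVec (ρ γ : Matrix (Fin d) (Fin d) ℂ) v ∈ W) →
    W = ⊥ ∨ W = ⊤

/-- `L` is a standard choice of exponents for `ρ`: `exp(2πi·L) = ρ(T)` and every eigenvalue of
`L` has real part in `[0,1)`. -/
def IsStdExponents {d : ℕ} (ρ : SL2Z →* GL (Fin d) ℂ) (L : Matrix (Fin d) (Fin d) ℂ) : Prop :=
  NormedSpace.exp (((2 * Real.pi * Complex.I : ℂ)) • L) =
      (ρ ModularGroup.T : Matrix (Fin d) (Fin d) ℂ) ∧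
  ∀ μ ∈ spectrum ℂ L, 0 ≤ μ.re ∧ μ.re < 1

/-- `ρ(T)` has finite order. -/
def TFiniteOrder {d : ℕ} (ρ : SL2Z →* GL (Fin d) ℂ) : Prop :=
  ∃ n : ℕ, 0 < n ∧ ρ ModularGroup.T ^ n = 1

/-- `ρ` is unitary. -/
def IsUnitaryRep {d : ℕ} (ρ : SL2Z →* GL (Fin d) ℂ) : Prop :=
  ∀ γ : SL2Z, (ρ γ : Matrix (Fin d) (Fin d) ℂ) ∈ Matrix.unitaryGroup (Fin d) ℂ

open NormedSpace Matrix in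
theorem detExp_deriv_value {d : ℕ} (A : Matrix (Fin d) (Fin d) ℂ) :
    (∑ σ : Equiv.Perm (Fin d), ((Equiv.Perm.sign σ : ℤ) : ℂ) *
        ∑ i, (∏ j ∈ Finset.univ.erase i, (1 : Matrix (Fin d) (Fin d) ℂ) (σ j) j) • A (σ i) i)
      = A.trace := by
  rw [Finset.sum_eq_single_of_mem 1 (Finset.mem_univ 1)]
  · rw [Equiv.Perm.sign_one]
    simp only [Units.val_one, Int.cast_one, one_mul, Matrix.trace, Matrix.diag, smul_eq_mul]
    refine Finset.sum_congr rfl fun x _ => ?_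
    have : ∀ j ∈ Finset.univ.erase x,
        (1 : Matrix (Fin d) (Fin d) ℂ) ((1 : Equiv.Perm (Fin d)) j) j = 1 := by
      intro j _; exact Matrix.one_apply_eq j
    rw [Finset.prod_congr rfl this, Finset.prod_const_one, one_mul]
    rfl
  · intro σ _ hσ
    have hD : (∑ i, (∏ j ∈ Finset.univ.erase i,
        (1 : Matrix (Fin d) (Fin d) ℂ) (σ j) j) • A (σ i) i) = 0 := by
      refine Finset.sum_eq_zero fun i _ => ?_
      obtain ⟨k, hk⟩ : ∃ k, σ k ≠ k := by
        by_contra h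
        push_neg at h
        exact hσ (Equiv.ext h)
      by_cases hi : σ i = i
      · have hki : k ≠ i := fun h => hk (by rw [h, hi])
        have : (∏ j ∈ Finset.univ.erase i, (1 : Matrix (Fin d) (Fin d) ℂ) (σ j) j) = 0 :=
          Finset.prod_eq_zero (Finset.mem_erase.mpr ⟨hki, Finset.mem_univ k⟩)
            (Matrix.one_apply_ne hk)
        rw [this, zero_smul]
      · have hki : σ i ≠ i := hi
        have hk2 : σ (σ i) ≠ σ i := fun h => hi (σ.injective h)
        have : (∏ j ∈ Finset.univ.erase i, (1 : Matrix (Fin d) (Fin d) ℂ) (σ j) j) = 0 :=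
          Finset.prod_eq_zero (Finset.mem_erase.mpr ⟨hki, Finset.mem_univ _⟩)
            (Matrix.one_apply_ne hk2)
        rw [this, zero_smul]
    rw [hD, mul_zero]

open NormedSpace Matrix in
theorem detExp_hasDerivAt_zero {d : ℕ} (A : Matrix (Fin d) (Fin d) ℂ) :
    HasDerivAt (fun w : ℂ => (exp (w • A)).det) A.trace 0 := by
  letI : SeminormedRing (Matrix (Fin d) (Fin d) ℂ) := Matrix.linftyOpSemiNormedRing
  letI : NormedRing (Matrix (Fin d) (Fin d) ℂ) := Matrix.linftyOpNormedRing
  letI : NormedAlgebra ℂ (Matrix (Fin d) (Fin d) ℂ) := Matrix.linftyOpNormedAlgebra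
  have hentry : ∀ i j : Fin d,
      HasDerivAt (fun w : ℂ => exp (w • A) i j) (A i j) 0 := by
    intro i j
    have hM : HasDerivAt (fun u : ℂ => exp (u • A)) (exp ((0:ℂ) • A) * A) 0 :=
      hasDerivAt_exp_smul_const A 0
    rw [zero_smul, exp_zero, one_mul] at hM
    let eLM : Matrix (Fin d) (Fin d) ℂ →ₗ[ℂ] ℂ :=
      { toFun := fun M => M i j, map_add' := fun _ _ => rfl, map_smul' := fun _ _ => rfl }
    have h := (LinearMap.toContinuousLinearMap eLM).hasFDerivAt.comp_hasDerivAt 0 hM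
    exact h
  have hval : ∀ i j : Fin d, exp ((0:ℂ) • A) i j = (1 : Matrix (Fin d) (Fin d) ℂ) i j := by
    intro i j; rw [zero_smul, exp_zero]
  have hterm : ∀ σ : Equiv.Perm (Fin d),
      HasDerivAt (fun w : ℂ => ((Equiv.Perm.sign σ : ℤ) : ℂ) * ∏ i, exp (w • A) (σ i) i)
        (((Equiv.Perm.sign σ : ℤ) : ℂ) *
          ∑ i, (∏ j ∈ Finset.univ.erase i, (1 : Matrix (Fin d) (Fin d) ℂ) (σ j) j)
            • A (σ i) i) 0 := by
    intro σ
    have h := HasDerivAt.fun_finsetProd (u := Finset.univ)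
      (f := fun i (w : ℂ) => exp (w • A) (σ i) i) (f' := fun i => A (σ i) i)
      (fun i _ => hentry (σ i) i)
    simp only [hval] at h
    exact h.const_mul _
  have hsum : HasDerivAt
      (fun w : ℂ => ∑ σ : Equiv.Perm (Fin d),
        ((Equiv.Perm.sign σ : ℤ) : ℂ) * ∏ i, exp (w • A) (σ i) i)
      (∑ σ : Equiv.Perm (Fin d), ((Equiv.Perm.sign σ : ℤ) : ℂ) *
        ∑ i, (∏ j ∈ Finset.univ.erase i, (1 : Matrix (Fin d) (Fin d) ℂ) (σ j) j)
          • A (σ i) i) 0 :=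
    HasDerivAt.fun_sum (fun σ _ => hterm σ)
  rw [detExp_deriv_value A] at hsum
  convert hsum using 2 with w
  rw [Matrix.det_apply']

open NormedSpace Matrix in
theorem det_exp_eq {d : ℕ} (A : Matrix (Fin d) (Fin d) ℂ) :
    (exp A).det = Complex.exp A.trace := by
  letI : SeminormedRing (Matrix (Fin d) (Fin d) ℂ) := Matrix.linftyOpSemiNormedRing
  letI : NormedRing (Matrix (Fin d) (Fin d) ℂ) := Matrix.linftyOpNormedRing
  letI : NormedAlgebra ℂ (Matrix (Fin d) (Fin d) ℂ) := Matrix.linftyOpNormedAlgebra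
  set c : ℂ := A.trace with hc
  set g : ℂ → ℂ := fun w => (exp (w • A)).det with hg
  have hom : ∀ z w : ℂ, g (z + w) = g z * g w := by
    intro z w
    have hcomm : Commute (z • A) (w • A) := ((Commute.refl A).smul_right w).smul_left z
    rw [hg]
    simp only
    rw [add_smul, Matrix.exp_add_of_commute _ _ hcomm, Matrix.det_mul]
  have h0 : HasDerivAt g c 0 := detExp_hasDerivAt_zero A
  have hgz : ∀ z : ℂ, HasDerivAt g (c * g z) z := by
    intro z
    have h1 : HasDerivAt (fun w : ℂ => g z * g w) (g z * c) ((fun w : ℂ => w - z) z) := by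
      simpa using h0.const_mul (g z)
    have hw : HasDerivAt (fun w : ℂ => w - z) 1 z := (hasDerivAt_id z).sub_const z
    have h2 := HasDerivAt.comp (h₂ := fun w : ℂ => g z * g w) (h := fun w : ℂ => w - z)
      (x := z) h1 hw
    have hfe : (fun w : ℂ => g z * g (w - z)) = g := by
      funext w
      rw [← hom z (w - z), add_sub_cancel]
    rw [show (fun w : ℂ => g z * g w) ∘ (fun w : ℂ => w - z) = fun w : ℂ => g z * g (w - z)
        from rfl, hfe] at h2
    simpa [mul_comm] using h2
  have hH : ∀ z : ℂ, HasDerivAt (fun w : ℂ => g w * Complex.exp (-(c * w))) 0 z := by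
    intro z
    have hin : HasDerivAt (fun w : ℂ => -(c * w)) (-c) z := by
      have h := ((hasDerivAt_id z).const_mul c).neg
      simp only [mul_one] at h
      exact h
    have he := hin.cexp
    have := (hgz z).mul he
    refine this.congr_deriv ?_
    ring
  have hconst := is_const_of_deriv_eq_zero
    (fun z => (hH z).differentiableAt) (fun z => (hH z).deriv) 1 0
  have hg0 : g 0 = 1 := by
    rw [hg]; simp only; rw [zero_smul, NormedSpace.exp_zero, Matrix.det_one]
  rw [mul_zero, neg_zero, Complex.exp_zero, mul_one, hg0] at hconst
  have hg1 : g 1 = Complex.exp c := by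
    have hne : Complex.exp (-(c * 1)) ≠ 0 := Complex.exp_ne_zero _
    rw [Complex.exp_neg, mul_one] at hconst
    exact (mul_inv_eq_one₀ (Complex.exp_ne_zero c)).mp hconst
  rw [hg] at hg1
  simpa using hg1

open ModularGroup Matrix in
theorem detT_pow12 {d : ℕ} (ρ : SL2Z →* GL (Fin d) ℂ) :
    (ρ T : Matrix (Fin d) (Fin d) ℂ).det ^ 12 = 1 := by
  have hST : (S * T) ^ 3 = S ^ 2 := by
    ext i j
    fin_cases i <;> fin_cases j <;>
      simp [pow_succ, Matrix.SpecialLinearGroup.coe_mul, coe_S, coe_T, Matrix.mul_apply,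
        Fin.sum_univ_succ]
  have hS4 : S ^ 4 = 1 := by
    ext i j
    fin_cases i <;> fin_cases j <;>
      simp [pow_succ, Matrix.SpecialLinearGroup.coe_mul, coe_S, Matrix.mul_apply,
        Fin.sum_univ_succ]
  set φ : SL2Z →* ℂˣ := (Matrix.GeneralLinearGroup.det).comp ρ with hφ
  set s : ℂˣ := φ S with hs
  set t : ℂˣ := φ T with ht
  have h1 : (s * t) ^ 3 = s ^ 2 := by
    rw [hs, ht, ← _root_.map_mul, ← _root_.map_pow, ← _root_.map_pow, hST]
  have h2 : s ^ 4 = 1 := by rw [hs, ← _root_.map_pow, hS4, _root_.map_one]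
  have hs12 : s ^ 12 = 1 := by
    rw [show (12 : ℕ) = 4 * 3 from rfl, pow_mul, h2, one_pow]
  have hs8 : s ^ 8 = 1 := by
    rw [show (8 : ℕ) = 4 * 2 from rfl, pow_mul, h2, one_pow]
  have ht12 : t ^ 12 = 1 := by
    have h := congrArg (fun x : ℂˣ => x ^ 4) h1
    simp only [mul_pow, ← pow_mul] at h
    norm_num at h
    rwa [hs12, hs8, one_mul] at h
  have : ((t : ℂ)) ^ 12 = 1 := by
    rw [← Units.val_pow_eq_pow_val, ht12, Units.val_one]
  rwa [ht, hφ, MonoidHom.comp_apply, Matrix.GeneralLinearGroup.val_det_apply] at this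

theorem stmt18 {d : ℕ} (ρ : SL2Z →* GL (Fin d) ℂ) (L : Matrix (Fin d) (Fin d) ℂ)
    (hL : NormedSpace.exp ((2 * Real.pi * Complex.I : ℂ) • L) =
      (ρ ModularGroup.T : Matrix (Fin d) (Fin d) ℂ)) :
    ∃ n : ℤ, 12 * Matrix.trace L = (n : ℂ) := by
  have h12 := detT_pow12 ρ
  rw [← hL, det_exp_eq, Matrix.trace_smul, smul_eq_mul,
    ← Complex.exp_nat_mul, Complex.exp_eq_one_iff] at h12
  obtain ⟨n, hn⟩ := h12
  refine ⟨n, ?_⟩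
  have h2 : (2 * Real.pi * Complex.I : ℂ) ≠ 0 := by
    simp [Real.pi_ne_zero, Complex.I_ne_zero]
  apply mul_left_cancel₀ h2
  push_cast at hn
  calc (2 * Real.pi * Complex.I : ℂ) * (12 * Matrix.trace L)
      = 12 * (2 * Real.pi * Complex.I * Matrix.trace L) := by ring
    _ = (n : ℂ) * (2 * Real.pi * Complex.I) := hn
    _ = (2 * Real.pi * Complex.I : ℂ) * (n : ℂ) := by ring


end
end
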